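/- Let A, B, M be discrete random variables, and for each value m in the range of M let E_m be a random variable. Let J_m be the indicator of the event {M = m}. Then I(A; B | M, E_M) ≤ Σ_m [ I(A; B | E_m) + I(J_m; B | E_m, A) ], where the sum is over all values m in the range of M and E_M denotes the variable E_m on the event M = m. -/
import Mathlib


open scoped BigOperators Classical

noncomputable section

variable {Ω : Type*} [Fintype Ω]

/-- Probability of an event under a mass function `μ`. -/
def prEv (μ : Ω → ℝ) (E : Ω → Prop) : ℝ := ∑ ω, if E ω then μ ω else 0

/-- Distribution (pmf) of a random variable. -/
def rvDist (μ : Ω → ℝ) {α : Type*} (X : Ω → α) : α → ℝ :=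
  fun a => prEv μ (fun ω => X ω = a)

/-- Conditional distribution of `X` given the event `B = b`. -/
def condDist (μ : Ω → ℝ) {α β : Type*} (X : Ω → α) (B : Ω → β) (b : β) : α → ℝ :=
  fun a => prEv μ (fun ω => X ω = a ∧ B ω = b) / prEv μ (fun ω => B ω = b)

/-- Product of two distributions. -/
def prodDist {α β : Type*} (P : α → ℝ) (Q : β → ℝ) : α × β → ℝ := fun p => P p.1 * Q p.2

/-- Statistical (total variation) distance between two distributions on a finite set. -/
def SD {α : Type*} [Fintype α] (P Q : α → ℝ) : ℝ := (1/2) * ∑ a, |P a - Q a|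

/-- Shannon entropy (base 2) of a distribution, with the convention `0 · log(1/0) = 0`. -/
def H2 {α : Type*} [Fintype α] (P : α → ℝ) : ℝ :=
  ∑ a, if P a = 0 then 0 else P a * Real.logb 2 (1 / P a)

/-- Shannon entropy of a random variable. -/
def entRV (μ : Ω → ℝ) {α : Type*} [Fintype α] (X : Ω → α) : ℝ := H2 (rvDist μ X)

/-- Conditional mutual information `I(A;B|C)` (in bits). -/
def condMI (μ : Ω → ℝ) {α β γ : Type*} [Fintype α] [Fintype β] [Fintype γ]
    (A : Ω → α) (B : Ω → β) (C : Ω → γ) : ℝ :=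
  entRV μ (fun ω => (A ω, C ω)) + entRV μ (fun ω => (B ω, C ω))
    - entRV μ (fun ω => (A ω, B ω, C ω)) - entRV μ C

/-- The conditional probability measure given `Z = z`. -/
def condMeas (μ : Ω → ℝ) {ζ : Type*} (Z : Ω → ζ) (z : ζ) : Ω → ℝ :=
  fun ω => if Z ω = z then μ ω / prEv μ (fun ω' => Z ω' = z) else 0

/-- `μ` is a probability mass function. -/
def IsPMF (μ : Ω → ℝ) : Prop := (∀ ω, 0 ≤ μ ω) ∧ ∑ ω, μ ω = 1

end

section Aux
open Finset
variable {Ω : Type*} [Fintype Ω]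

/-- pointwise entropy function -/
noncomputable def ent1 (t : ℝ) : ℝ := if t = 0 then 0 else t * Real.logb 2 (1 / t)

lemma H2_eq {α : Type*} [Fintype α] (P : α → ℝ) : H2 P = ∑ a, ent1 (P a) := rfl

lemma ent1_zero : ent1 0 = 0 := by simp [ent1]

lemma ent1_mul {p q : ℝ} (hp : 0 ≤ p) (hq : 0 ≤ q) :
    ent1 (p * q) = q * ent1 p + p * ent1 q := by
  rcases eq_or_lt_of_le hp with h | hp'
  · simp [ent1, ← h]
  rcases eq_or_lt_of_le hq with h | hq'
  · simp [ent1, ← h]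
  have hpq : p * q ≠ 0 := by positivity
  rw [ent1, ent1, ent1, if_neg hpq, if_neg hp'.ne', if_neg hq'.ne']
  rw [show (1 : ℝ) / (p * q) = (1/p) * (1/q) by field_simp]
  rw [Real.logb_mul (by positivity) (by positivity)]
  ring

lemma prEv_nonneg (μ : Ω → ℝ) (h : ∀ ω, 0 ≤ μ ω) (E : Ω → Prop) : 0 ≤ prEv μ E := by
  refine Finset.sum_nonneg fun ω _ => ?_
  split <;> simp [h ω]

lemma prEv_congr (μ : Ω → ℝ) {E F : Ω → Prop} (h : ∀ ω, E ω ↔ F ω) :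
    prEv μ E = prEv μ F := by
  refine Finset.sum_congr rfl fun ω _ => ?_
  simp [h ω]

lemma prEv_mono (μ : Ω → ℝ) (hμ : ∀ ω, 0 ≤ μ ω) {E F : Ω → Prop} (h : ∀ ω, E ω → F ω) :
    prEv μ E ≤ prEv μ F := by
  refine Finset.sum_le_sum fun ω _ => ?_
  by_cases hE : E ω
  · simp [hE, h ω hE]
  · simp only [if_neg hE]
    split <;> simp [hμ ω]

lemma rvDist_nonneg (μ : Ω → ℝ) (h : ∀ ω, 0 ≤ μ ω) {α : Type*} (X : Ω → α) (a : α) :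
    0 ≤ rvDist μ X a := prEv_nonneg μ h _

lemma sum_rvDist (μ : Ω → ℝ) (hμ : IsPMF μ) {α : Type*} [Fintype α] (X : Ω → α) :
    ∑ a, rvDist μ X a = 1 := by
  unfold rvDist prEv
  rw [Finset.sum_comm]
  rw [← hμ.2]
  refine Finset.sum_congr rfl fun ω _ => ?_
  rw [Finset.sum_ite_eq Finset.univ (X ω) (fun _ => μ ω)]
  simp

lemma entRV_eq_of_inj {α α' : Type*} [Fintype α] [Fintype α'] (μ : Ω → ℝ)
    (X : Ω → α) (Y : Ω → α') (σ : α → α') (hσ : Function.Injective σ)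
    (h : ∀ ω, Y ω = σ (X ω)) : entRV μ Y = entRV μ X := by
  unfold entRV
  rw [H2_eq, H2_eq]
  rw [← Finset.sum_subset (Finset.subset_univ ((Finset.univ : Finset α).image σ))]
  · rw [Finset.sum_image (fun a _ b _ hab => hσ hab)]
    refine Finset.sum_congr rfl fun a _ => ?_
    congr 1
    unfold rvDist prEv
    refine Finset.sum_congr rfl fun ω _ => ?_
    simp [h ω, hσ.eq_iff]
  · intro a' _ ha'
    have hz : rvDist μ Y a' = 0 := by
      unfold rvDist prEv
      refine Finset.sum_eq_zero fun ω _ => ?_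
      rw [if_neg]
      intro hc
      exact ha' (Finset.mem_image.2 ⟨X ω, Finset.mem_univ _, by rw [← h ω, hc]⟩)
    simp [hz, ent1_zero]

lemma rvDist_pair_sum_right {χ ψ : Type*} [Fintype ψ] (μ : Ω → ℝ)
    (X : Ω → χ) (Y : Ω → ψ) (x : χ) :
    ∑ y, rvDist μ (fun ω => (X ω, Y ω)) (x, y) = rvDist μ X x := by
  unfold rvDist prEv
  rw [Finset.sum_comm]
  refine Finset.sum_congr rfl fun ω _ => ?_
  simp only [Prod.mk.injEq]
  by_cases h : X ω = x
  · simp only [h, true_and]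
    rw [Finset.sum_ite_eq Finset.univ (Y ω) (fun _ => μ ω)]
    simp
  · simp [h]

lemma rvDist_pair_sum_left {χ ψ : Type*} [Fintype χ] (μ : Ω → ℝ)
    (X : Ω → χ) (Y : Ω → ψ) (y : ψ) :
    ∑ x, rvDist μ (fun ω => (X ω, Y ω)) (x, y) = rvDist μ Y y := by
  unfold rvDist prEv
  rw [Finset.sum_comm]
  refine Finset.sum_congr rfl fun ω _ => ?_
  simp only [Prod.mk.injEq]
  by_cases h : Y ω = y
  · simp only [h, and_true]
    rw [Finset.sum_ite_eq Finset.univ (X ω) (fun _ => μ ω)]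
    simp
  · simp [h]

end Aux

section Aux2
variable {Ω : Type*} [Fintype Ω]

lemma IsPMF_condMeas (μ : Ω → ℝ) (hμ : IsPMF μ) {ζ : Type*} (Z : Ω → ζ) (z : ζ)
    (hz : 0 < prEv μ (fun ω => Z ω = z)) : IsPMF (condMeas μ Z z) := by
  constructor
  · intro ω
    unfold condMeas
    split
    · exact div_nonneg (hμ.1 ω) hz.le
    · exact le_refl 0
  · have h1 : ∑ ω, condMeas μ Z z ω
        = (∑ ω, if Z ω = z then μ ω else 0) / prEv μ (fun ω' => Z ω' = z) := by
      rw [Finset.sum_div]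
      refine Finset.sum_congr rfl fun ω _ => ?_
      unfold condMeas
      split <;> simp
    rw [h1]
    exact div_self hz.ne'

lemma rvDist_condMeas (μ : Ω → ℝ) {ζ α : Type*} (Z : Ω → ζ) (z : ζ)
    (hz : prEv μ (fun ω => Z ω = z) ≠ 0) (X : Ω → α) (x : α) :
    prEv μ (fun ω => Z ω = z) * rvDist (condMeas μ Z z) X x
      = prEv μ (fun ω => X ω = x ∧ Z ω = z) := by
  have hz' : (∑ ω, if Z ω = z then μ ω else 0) ≠ 0 := hz
  unfold rvDist condMeas prEv
  rw [Finset.mul_sum]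
  refine Finset.sum_congr rfl fun ω _ => ?_
  by_cases h1 : X ω = x <;> by_cases h2 : Z ω = z <;> simp [h1, h2]
  rw [mul_comm]
  exact div_mul_cancel₀ _ hz'

lemma entRV_decomp {γ χ : Type*} [Fintype γ] [Fintype χ] (μ : Ω → ℝ) (hμ : IsPMF μ)
    (Z : Ω → γ) (G : γ → Ω → χ) :
    entRV μ (fun ω => (G (Z ω) ω, Z ω)) =
      entRV μ Z + ∑ z ∈ Finset.univ.filter (fun z => 0 < prEv μ (fun ω => Z ω = z)),
        prEv μ (fun ω => Z ω = z) * entRV (condMeas μ Z z) (G z) := by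
  have key : ∀ z : γ, ∑ x, ent1 (rvDist μ (fun ω => (G (Z ω) ω, Z ω)) (x, z))
      = ent1 (prEv μ (fun ω => Z ω = z))
        + (if 0 < prEv μ (fun ω => Z ω = z)
            then prEv μ (fun ω => Z ω = z) * entRV (condMeas μ Z z) (G z) else 0) := by
    intro z
    have hdist : ∀ x, rvDist μ (fun ω => (G (Z ω) ω, Z ω)) (x, z)
        = prEv μ (fun ω => G z ω = x ∧ Z ω = z) := by
      intro x
      unfold rvDist
      refine prEv_congr μ fun ω => ?_
      simp only [Prod.mk.injEq]
      constructor
      · rintro ⟨h1, h2⟩; subst h2; exact ⟨h1, rfl⟩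
      · rintro ⟨h1, h2⟩; subst h2; exact ⟨h1, rfl⟩
    by_cases hz : 0 < prEv μ (fun ω => Z ω = z)
    · have hpmf := IsPMF_condMeas μ hμ Z z hz
      have heq : ∀ x, rvDist μ (fun ω => (G (Z ω) ω, Z ω)) (x, z)
          = prEv μ (fun ω => Z ω = z) * rvDist (condMeas μ Z z) (G z) x := by
        intro x
        rw [hdist x, rvDist_condMeas μ Z z hz.ne' (G z) x]
      rw [if_pos hz]
      calc ∑ x, ent1 (rvDist μ (fun ω => (G (Z ω) ω, Z ω)) (x, z))
          = ∑ x, (rvDist (condMeas μ Z z) (G z) x * ent1 (prEv μ (fun ω => Z ω = z))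
              + prEv μ (fun ω => Z ω = z) * ent1 (rvDist (condMeas μ Z z) (G z) x)) := by
            refine Finset.sum_congr rfl fun x _ => ?_
            rw [heq x, ent1_mul hz.le (rvDist_nonneg _ hpmf.1 _ x)]
        _ = (∑ x, rvDist (condMeas μ Z z) (G z) x) * ent1 (prEv μ (fun ω => Z ω = z))
              + prEv μ (fun ω => Z ω = z) * ∑ x, ent1 (rvDist (condMeas μ Z z) (G z) x) := by
            rw [Finset.sum_add_distrib, ← Finset.sum_mul, ← Finset.mul_sum]
        _ = ent1 (prEv μ (fun ω => Z ω = z))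
              + prEv μ (fun ω => Z ω = z) * entRV (condMeas μ Z z) (G z) := by
            rw [sum_rvDist _ hpmf, one_mul, entRV, H2_eq]
    · have hnn := prEv_nonneg μ hμ.1 (fun ω => Z ω = z)
      have hz0 : prEv μ (fun ω => Z ω = z) = 0 := le_antisymm (not_lt.mp hz) hnn
      have hall : ∀ x, rvDist μ (fun ω => (G (Z ω) ω, Z ω)) (x, z) = 0 := by
        intro x
        have hle : prEv μ (fun ω => G z ω = x ∧ Z ω = z) ≤ prEv μ (fun ω => Z ω = z) :=
          prEv_mono μ hμ.1 fun ω h => h.2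
        have hge : 0 ≤ prEv μ (fun ω => G z ω = x ∧ Z ω = z) := prEv_nonneg μ hμ.1 _
        rw [hdist x]
        linarith
      rw [if_neg hz, hz0]
      simp [hall, ent1_zero]
  calc entRV μ (fun ω => (G (Z ω) ω, Z ω))
      = ∑ z, ∑ x, ent1 (rvDist μ (fun ω => (G (Z ω) ω, Z ω)) (x, z)) := by
        rw [entRV, H2_eq, Fintype.sum_prod_type, Finset.sum_comm]
    _ = ∑ z, (ent1 (prEv μ (fun ω => Z ω = z))
          + (if 0 < prEv μ (fun ω => Z ω = z)
              then prEv μ (fun ω => Z ω = z) * entRV (condMeas μ Z z) (G z) else 0)) :=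
        Finset.sum_congr rfl fun z _ => key z
    _ = _ := by
        rw [Finset.sum_add_distrib, ← Finset.sum_filter, entRV, H2_eq]
        rfl

end Aux2

section Aux3
variable {Ω : Type*} [Fintype Ω]

lemma condMI_relabel_fst {α α' β γ : Type*} [Fintype α] [Fintype α'] [Fintype β] [Fintype γ]
    (μ : Ω → ℝ) (X : Ω → α) (X' : Ω → α') (B : Ω → β) (C : Ω → γ)
    (σ : α → α') (hσ : Function.Injective σ) (h : ∀ ω, X' ω = σ (X ω)) :
    condMI μ X' B C = condMI μ X B C := by
  unfold condMI
  have e1 : entRV μ (fun ω => (X' ω, C ω)) = entRV μ (fun ω => (X ω, C ω)) :=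
    entRV_eq_of_inj μ _ _ (Prod.map σ id) (hσ.prodMap fun _ _ h => h)
      (fun ω => by simp [h ω, Prod.map])
  have e2 : entRV μ (fun ω => (X' ω, B ω, C ω)) = entRV μ (fun ω => (X ω, B ω, C ω)) :=
    entRV_eq_of_inj μ _ _ (Prod.map σ id) (hσ.prodMap fun _ _ h => h)
      (fun ω => by simp [h ω, Prod.map])
  rw [e1, e2]

lemma condMI_relabel_cond {α β γ γ' : Type*} [Fintype α] [Fintype β] [Fintype γ] [Fintype γ']
    (μ : Ω → ℝ) (A : Ω → α) (B : Ω → β) (C : Ω → γ) (C' : Ω → γ')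
    (σ : γ → γ') (hσ : Function.Injective σ) (h : ∀ ω, C' ω = σ (C ω)) :
    condMI μ A B C' = condMI μ A B C := by
  unfold condMI
  have hid : Function.Injective (id : α → α) := fun _ _ h => h
  have hid2 : Function.Injective (id : β → β) := fun _ _ h => h
  have inj2 : Function.Injective (Prod.map (id : α → α) σ) := hid.prodMap hσ
  have inj3 : Function.Injective (Prod.map (id : β → β) σ) := hid2.prodMap hσ
  have inj4 : Function.Injective (Prod.map (id : α → α) (Prod.map (id : β → β) σ)) :=
    hid.prodMap inj3
  have e1 : entRV μ (fun ω => (A ω, C' ω)) = entRV μ (fun ω => (A ω, C ω)) :=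
    entRV_eq_of_inj μ _ _ _ inj2 (fun ω => by simp [h ω, Prod.map])
  have e2 : entRV μ (fun ω => (B ω, C' ω)) = entRV μ (fun ω => (B ω, C ω)) :=
    entRV_eq_of_inj μ _ _ _ inj3 (fun ω => by simp [h ω, Prod.map])
  have e3 : entRV μ (fun ω => (A ω, B ω, C' ω)) = entRV μ (fun ω => (A ω, B ω, C ω)) :=
    entRV_eq_of_inj μ _ _ _ inj4 (fun ω => by simp [h ω, Prod.map])
  have e4 : entRV μ C' = entRV μ C := entRV_eq_of_inj μ _ _ σ hσ h
  rw [e1, e2, e3, e4]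

/-- Chain rule: `I(X,Y;B|C) = I(X;B|C) + I(Y;B|X,C)` (exact identity). -/
lemma condMI_chain {χ ψ β γ : Type*} [Fintype χ] [Fintype ψ] [Fintype β] [Fintype γ]
    (μ : Ω → ℝ) (X : Ω → χ) (Y : Ω → ψ) (B : Ω → β) (C : Ω → γ) :
    condMI μ (fun ω => (X ω, Y ω)) B C
      = condMI μ X B C + condMI μ Y B (fun ω => (X ω, C ω)) := by
  unfold condMI
  have e1 : entRV μ (fun ω => ((X ω, Y ω), C ω)) = entRV μ (fun ω => (Y ω, X ω, C ω)) := by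
    refine entRV_eq_of_inj μ _ _ (fun p : ψ × χ × γ => ((p.2.1, p.1), p.2.2)) ?_ ?_
    · rintro ⟨y, x, c⟩ ⟨y', x', c'⟩ hp
      simp only [Prod.mk.injEq] at hp
      simp [Prod.ext_iff, hp.1.1, hp.1.2, hp.2]
    · intro ω; rfl
  have e2 : entRV μ (fun ω => (B ω, X ω, C ω)) = entRV μ (fun ω => (X ω, B ω, C ω)) := by
    refine entRV_eq_of_inj μ _ _ (fun p : χ × β × γ => (p.2.1, p.1, p.2.2)) ?_ ?_
    · rintro ⟨x, b, c⟩ ⟨x', b', c'⟩ hp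
      simp only [Prod.mk.injEq] at hp
      simp [Prod.ext_iff, hp.1, hp.2.1, hp.2.2]
    · intro ω; rfl
  have e3 : entRV μ (fun ω => ((X ω, Y ω), B ω, C ω))
      = entRV μ (fun ω => (Y ω, B ω, X ω, C ω)) := by
    refine entRV_eq_of_inj μ _ _
      (fun p : ψ × β × χ × γ => ((p.2.2.1, p.1), p.2.1, p.2.2.2)) ?_ ?_
    · rintro ⟨y, b, x, c⟩ ⟨y', b', x', c'⟩ hp
      simp only [Prod.mk.injEq] at hp
      simp [Prod.ext_iff, hp.1.1, hp.1.2, hp.2.1, hp.2.2]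
    · intro ω; rfl
  rw [e1, e2, e3]
  ring

/-- Decomposition of conditional mutual information over the values of `Z`. -/
lemma condMI_decomp {α β γ ε : Type*} [Fintype α] [Fintype β] [Fintype γ] [Fintype ε]
    (μ : Ω → ℝ) (hμ : IsPMF μ) (A : Ω → α) (B : Ω → β) (Z : Ω → γ) (E : γ → Ω → ε) :
    condMI μ A B (fun ω => (Z ω, E (Z ω) ω)) =
      ∑ z ∈ Finset.univ.filter (fun z => 0 < prEv μ (fun ω => Z ω = z)),
        prEv μ (fun ω => Z ω = z) * condMI (condMeas μ Z z) A B (E z) := by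
  have e1 : entRV μ (fun ω => (A ω, (Z ω, E (Z ω) ω)))
      = entRV μ (fun ω => ((A ω, E (Z ω) ω), Z ω)) :=
    entRV_eq_of_inj μ _ _ (fun p : (α × ε) × γ => (p.1.1, (p.2, p.1.2)))
      (by rintro ⟨⟨a, e⟩, z⟩ ⟨⟨a', e'⟩, z'⟩ hp
          simp only [Prod.mk.injEq] at hp
          simp [Prod.ext_iff, hp.1, hp.2.1, hp.2.2])
      (fun ω => rfl)
  have e2 : entRV μ (fun ω => (B ω, (Z ω, E (Z ω) ω)))
      = entRV μ (fun ω => ((B ω, E (Z ω) ω), Z ω)) :=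
    entRV_eq_of_inj μ _ _ (fun p : (β × ε) × γ => (p.1.1, (p.2, p.1.2)))
      (by rintro ⟨⟨a, e⟩, z⟩ ⟨⟨a', e'⟩, z'⟩ hp
          simp only [Prod.mk.injEq] at hp
          simp [Prod.ext_iff, hp.1, hp.2.1, hp.2.2])
      (fun ω => rfl)
  have e3 : entRV μ (fun ω => (A ω, B ω, (Z ω, E (Z ω) ω)))
      = entRV μ (fun ω => ((A ω, B ω, E (Z ω) ω), Z ω)) :=
    entRV_eq_of_inj μ _ _ (fun p : (α × β × ε) × γ => (p.1.1, p.1.2.1, (p.2, p.1.2.2)))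
      (by rintro ⟨⟨a, b, e⟩, z⟩ ⟨⟨a', b', e'⟩, z'⟩ hp
          simp only [Prod.mk.injEq] at hp
          simp [Prod.ext_iff, hp.1, hp.2.1, hp.2.2.1, hp.2.2.2])
      (fun ω => rfl)
  have e4 : entRV μ (fun ω => (Z ω, E (Z ω) ω))
      = entRV μ (fun ω => (E (Z ω) ω, Z ω)) :=
    entRV_eq_of_inj μ _ _ (fun p : ε × γ => (p.2, p.1))
      (by rintro ⟨e, z⟩ ⟨e', z'⟩ hp
          simp only [Prod.mk.injEq] at hp
          simp [Prod.ext_iff, hp.1, hp.2])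
      (fun ω => rfl)
  have d1 := entRV_decomp μ hμ Z (fun z ω => (A ω, E z ω))
  have d2 := entRV_decomp μ hμ Z (fun z ω => (B ω, E z ω))
  have d3 := entRV_decomp μ hμ Z (fun z ω => (A ω, B ω, E z ω))
  have d4 := entRV_decomp μ hμ Z (fun z ω => E z ω)
  unfold condMI
  rw [e1, e2, e3, e4, d1, d2, d3, d4]
  rw [show ∀ w s1 s2 s3 s4 : ℝ, (w + s1) + (w + s2) - (w + s3) - (w + s4) = s1 + s2 - s3 - s4
      from fun _ _ _ _ _ => by ring]
  rw [← Finset.sum_add_distrib, ← Finset.sum_sub_distrib, ← Finset.sum_sub_distrib]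
  refine Finset.sum_congr rfl fun z _ => ?_
  ring
end Aux3

section Aux4
variable {Ω : Type*} [Fintype Ω]

lemma marg_AC {α β γ : Type*} [Fintype β] (μ : Ω → ℝ) (A : Ω → α) (B : Ω → β) (C : Ω → γ)
    (a : α) (c : γ) :
    rvDist μ (fun ω => (A ω, C ω)) (a, c)
      = ∑ b, rvDist μ (fun ω => (A ω, B ω, C ω)) (a, b, c) := by
  rw [← rvDist_pair_sum_right μ (fun ω => (A ω, C ω)) B (a, c)]
  refine Finset.sum_congr rfl fun b _ => ?_
  unfold rvDist
  refine (prEv_congr μ fun ω => ?_).symm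
  simp only [Prod.mk.injEq]
  tauto

lemma marg_BC {α β γ : Type*} [Fintype α] (μ : Ω → ℝ) (A : Ω → α) (B : Ω → β) (C : Ω → γ)
    (b : β) (c : γ) :
    rvDist μ (fun ω => (B ω, C ω)) (b, c)
      = ∑ a, rvDist μ (fun ω => (A ω, B ω, C ω)) (a, b, c) :=
  (rvDist_pair_sum_left μ A (fun ω => (B ω, C ω)) (b, c)).symm

lemma marg_C {α β γ : Type*} [Fintype α] [Fintype β] (μ : Ω → ℝ)
    (A : Ω → α) (B : Ω → β) (C : Ω → γ) (c : γ) :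
    rvDist μ C c = ∑ a, ∑ b, rvDist μ (fun ω => (A ω, B ω, C ω)) (a, b, c) := by
  calc rvDist μ C c = ∑ b, rvDist μ (fun ω => (B ω, C ω)) (b, c) :=
        (rvDist_pair_sum_left μ B C c).symm
    _ = ∑ b, ∑ a, rvDist μ (fun ω => (A ω, B ω, C ω)) (a, b, c) :=
        Finset.sum_congr rfl fun b _ => marg_BC μ A B C b c
    _ = ∑ a, ∑ b, rvDist μ (fun ω => (A ω, B ω, C ω)) (a, b, c) := Finset.sum_comm

lemma condMI_nonneg {α β γ : Type*} [Fintype α] [Fintype β] [Fintype γ]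
    (μ : Ω → ℝ) (hμ : IsPMF μ) (A : Ω → α) (B : Ω → β) (C : Ω → γ) :
    0 ≤ condMI μ A B C := by
  have hL : 0 < Real.log 2 := Real.log_pos (by norm_num)
  let P : α → β → γ → ℝ := fun a b c => rvDist μ (fun ω => (A ω, B ω, C ω)) (a, b, c)
  let SAC : α → γ → ℝ := fun a c => ∑ b, P a b c
  let SBC : β → γ → ℝ := fun b c => ∑ a, P a b c
  let SC : γ → ℝ := fun c => ∑ a, ∑ b, P a b c
  have hP0 : ∀ a b c, 0 ≤ P a b c := fun a b c => rvDist_nonneg μ hμ.1 _ _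
  have hSAC0 : ∀ a c, 0 ≤ SAC a c := fun a c => Finset.sum_nonneg fun b _ => hP0 a b c
  have hSBC0 : ∀ b c, 0 ≤ SBC b c := fun b c => Finset.sum_nonneg fun a _ => hP0 a b c
  have hSC0 : ∀ c, 0 ≤ SC c := fun c =>
    Finset.sum_nonneg fun a _ => Finset.sum_nonneg fun b _ => hP0 a b c
  have hsum1 : ∑ a, ∑ b, ∑ c, P a b c = 1 := by
    have h := sum_rvDist μ hμ (fun ω => (A ω, B ω, C ω))
    rw [Fintype.sum_prod_type] at h
    calc ∑ a, ∑ b, ∑ c, P a b c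
        = ∑ a, ∑ p : β × γ, rvDist μ (fun ω => (A ω, B ω, C ω)) (a, p.1, p.2) := by
          refine Finset.sum_congr rfl fun a _ => ?_
          rw [Fintype.sum_prod_type]
      _ = 1 := h
  have hPle_SAC : ∀ a b c, P a b c ≤ SAC a c := fun a b c =>
    Finset.single_le_sum (f := fun b => P a b c) (fun b _ => hP0 a b c) (Finset.mem_univ b)
  have hPle_SBC : ∀ a b c, P a b c ≤ SBC b c := fun a b c =>
    Finset.single_le_sum (f := fun a => P a b c) (fun a _ => hP0 a b c) (Finset.mem_univ a)
  have hSACle_SC : ∀ a c, SAC a c ≤ SC c := fun a c =>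
    Finset.single_le_sum (f := fun a => ∑ b, P a b c)
      (fun a _ => Finset.sum_nonneg fun b _ => hP0 a b c) (Finset.mem_univ a)
  -- pointwise entropy identities
  have hA : ∀ a c, ent1 (SAC a c)
      = ∑ b, (if P a b c = 0 then 0 else P a b c * Real.logb 2 (1 / SAC a c)) := by
    intro a c
    by_cases hs : SAC a c = 0
    · have hz : ∀ b, P a b c = 0 := by
        intro b
        have := (Finset.sum_eq_zero_iff_of_nonneg (fun b _ => hP0 a b c)).1 hs b
          (Finset.mem_univ b)
        exact this
      simp [ent1, hs, hz]
    · rw [ent1, if_neg hs, show SAC a c = ∑ b, P a b c from rfl, Finset.sum_mul]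
      refine Finset.sum_congr rfl fun b _ => ?_
      by_cases hp : P a b c = 0 <;> simp [hp]
  have hB : ∀ b c, ent1 (SBC b c)
      = ∑ a, (if P a b c = 0 then 0 else P a b c * Real.logb 2 (1 / SBC b c)) := by
    intro b c
    by_cases hs : SBC b c = 0
    · have hz : ∀ a, P a b c = 0 := fun a =>
        (Finset.sum_eq_zero_iff_of_nonneg (fun a _ => hP0 a b c)).1 hs a (Finset.mem_univ a)
      simp [ent1, hs, hz]
    · rw [ent1, if_neg hs, show SBC b c = ∑ a, P a b c from rfl, Finset.sum_mul]
      refine Finset.sum_congr rfl fun a _ => ?_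
      by_cases hp : P a b c = 0 <;> simp [hp]
  have hC : ∀ c, ent1 (SC c)
      = ∑ a, ∑ b, (if P a b c = 0 then 0 else P a b c * Real.logb 2 (1 / SC c)) := by
    intro c
    by_cases hs : SC c = 0
    · have hz : ∀ a b, P a b c = 0 := by
        intro a b
        have h1 : ∑ b, P a b c = 0 :=
          (Finset.sum_eq_zero_iff_of_nonneg (fun a _ =>
            Finset.sum_nonneg fun b _ => hP0 a b c)).1 hs a (Finset.mem_univ a)
        exact (Finset.sum_eq_zero_iff_of_nonneg (fun b _ => hP0 a b c)).1 h1 b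
          (Finset.mem_univ b)
      simp [ent1, hs, hz]
    · rw [ent1, if_neg hs, show SC c = ∑ a, ∑ b, P a b c from rfl, Finset.sum_mul]
      refine Finset.sum_congr rfl fun a _ => ?_
      rw [Finset.sum_mul]
      refine Finset.sum_congr rfl fun b _ => ?_
      by_cases hp : P a b c = 0 <;> simp [hp]
  -- rewrite condMI as a triple sum
  have eABC : entRV μ (fun ω => (A ω, B ω, C ω)) = ∑ a, ∑ b, ∑ c, ent1 (P a b c) := by
    rw [entRV, H2_eq, Fintype.sum_prod_type]
    refine Finset.sum_congr rfl fun a _ => ?_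
    rw [Fintype.sum_prod_type]
  have eAC : entRV μ (fun ω => (A ω, C ω)) = ∑ a, ∑ c, ent1 (SAC a c) := by
    rw [entRV, H2_eq, Fintype.sum_prod_type]
    refine Finset.sum_congr rfl fun a _ => Finset.sum_congr rfl fun c _ => ?_
    rw [marg_AC μ A B C a c]
  have eBC : entRV μ (fun ω => (B ω, C ω)) = ∑ b, ∑ c, ent1 (SBC b c) := by
    rw [entRV, H2_eq, Fintype.sum_prod_type]
    refine Finset.sum_congr rfl fun b _ => Finset.sum_congr rfl fun c _ => ?_
    rw [marg_BC μ A B C b c]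
  have eC : entRV μ C = ∑ c, ent1 (SC c) := by
    rw [entRV, H2_eq]
    exact Finset.sum_congr rfl fun c _ => by rw [marg_C μ A B C c]
  -- combined expression
  have hcomb : condMI μ A B C = ∑ a, ∑ b, ∑ c,
      ((if P a b c = 0 then 0 else P a b c * Real.logb 2 (1 / SAC a c))
        + (if P a b c = 0 then 0 else P a b c * Real.logb 2 (1 / SBC b c))
        - ent1 (P a b c)
        - (if P a b c = 0 then 0 else P a b c * Real.logb 2 (1 / SC c))) := by
    unfold condMI
    rw [eABC, eAC, eBC, eC]
    have t1 : (∑ a, ∑ c, ent1 (SAC a c)) = ∑ a, ∑ b, ∑ c,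
        (if P a b c = 0 then 0 else P a b c * Real.logb 2 (1 / SAC a c)) := by
      refine Finset.sum_congr rfl fun a _ => ?_
      rw [Finset.sum_comm]
      exact Finset.sum_congr rfl fun c _ => hA a c
    have t2 : (∑ b, ∑ c, ent1 (SBC b c)) = ∑ a, ∑ b, ∑ c,
        (if P a b c = 0 then 0 else P a b c * Real.logb 2 (1 / SBC b c)) := by
      rw [show (∑ b, ∑ c, ent1 (SBC b c)) = ∑ b, ∑ c, ∑ a,
          (if P a b c = 0 then 0 else P a b c * Real.logb 2 (1 / SBC b c)) from
        Finset.sum_congr rfl fun b _ => Finset.sum_congr rfl fun c _ => hB b c]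
      rw [show (∑ b, ∑ c, ∑ a, (if P a b c = 0 then 0
          else P a b c * Real.logb 2 (1 / SBC b c)))
          = ∑ b, ∑ a, ∑ c, (if P a b c = 0 then 0
          else P a b c * Real.logb 2 (1 / SBC b c)) from
        Finset.sum_congr rfl fun b _ => Finset.sum_comm]
      exact Finset.sum_comm
    have t4 : (∑ c, ent1 (SC c)) = ∑ a, ∑ b, ∑ c,
        (if P a b c = 0 then 0 else P a b c * Real.logb 2 (1 / SC c)) := by
      rw [show (∑ c, ent1 (SC c)) = ∑ c, ∑ a, ∑ b,
          (if P a b c = 0 then 0 else P a b c * Real.logb 2 (1 / SC c)) from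
        Finset.sum_congr rfl fun c _ => hC c]
      rw [Finset.sum_comm]
      exact Finset.sum_congr rfl fun a _ => Finset.sum_comm
    rw [t1, t2, t4]
    rw [← Finset.sum_add_distrib, ← Finset.sum_sub_distrib, ← Finset.sum_sub_distrib]
    refine Finset.sum_congr rfl fun a _ => ?_
    rw [← Finset.sum_add_distrib, ← Finset.sum_sub_distrib, ← Finset.sum_sub_distrib]
    refine Finset.sum_congr rfl fun b _ => ?_
    rw [← Finset.sum_add_distrib, ← Finset.sum_sub_distrib, ← Finset.sum_sub_distrib]
  -- termwise lower bound
  have hterm : ∀ a b c,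
      (P a b c - (if P a b c = 0 then 0 else SAC a c * SBC b c / SC c)) / Real.log 2 ≤
      ((if P a b c = 0 then 0 else P a b c * Real.logb 2 (1 / SAC a c))
        + (if P a b c = 0 then 0 else P a b c * Real.logb 2 (1 / SBC b c))
        - ent1 (P a b c)
        - (if P a b c = 0 then 0 else P a b c * Real.logb 2 (1 / SC c))) := by
    intro a b c
    by_cases hp : P a b c = 0
    · simp [hp, ent1]
    · have hp' : 0 < P a b c := lt_of_le_of_ne (hP0 a b c) (Ne.symm hp)
      have hac : 0 < SAC a c := lt_of_lt_of_le hp' (hPle_SAC a b c)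
      have hbc : 0 < SBC b c := lt_of_lt_of_le hp' (hPle_SBC a b c)
      have hc : 0 < SC c := lt_of_lt_of_le hac (hSACle_SC a c)
      rw [if_neg hp, if_neg hp, if_neg hp, if_neg hp, ent1, if_neg hp]
      set p := P a b c
      set t : ℝ := SAC a c * SBC b c / (p * SC c) with hts
      have ht : 0 < t := by positivity
      have hRHS : p * Real.logb 2 (1 / SAC a c) + p * Real.logb 2 (1 / SBC b c)
          - p * Real.logb 2 (1 / p) - p * Real.logb 2 (1 / SC c)
          = p * (-Real.log t) / Real.log 2 := by
        rw [hts]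
        rw [Real.log_div (by positivity) (by positivity),
            Real.log_mul (by positivity) (by positivity),
            Real.log_mul (by positivity) (by positivity)]
        simp only [Real.logb, Real.log_div (by norm_num : (1:ℝ) ≠ 0) hac.ne',
          Real.log_div (by norm_num : (1:ℝ) ≠ 0) hbc.ne',
          Real.log_div (by norm_num : (1:ℝ) ≠ 0) hc.ne',
          Real.log_div (by norm_num : (1:ℝ) ≠ 0) hp, Real.log_one]
        field_simp
        ring
      have hlog : Real.log t ≤ t - 1 := Real.log_le_sub_one_of_pos ht
      have hpt : p * t = SAC a c * SBC b c / SC c := by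
        rw [hts]
        field_simp
      have key : p * (1 - t) ≤ p * (-Real.log t) :=
        mul_le_mul_of_nonneg_left (by linarith) hp'.le
      rw [hRHS]
      have : p - SAC a c * SBC b c / SC c = p * (1 - t) := by
        rw [← hpt]; ring
      rw [this]
      gcongr
  -- sum the bound
  have hsum_bound : (∑ a, ∑ b, ∑ c,
      (P a b c - (if P a b c = 0 then 0 else SAC a c * SBC b c / SC c)) / Real.log 2)
      ≤ condMI μ A B C := by
    rw [hcomb]
    refine Finset.sum_le_sum fun a _ => Finset.sum_le_sum fun b _ =>
      Finset.sum_le_sum fun c _ => hterm a b c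
  -- the left side is nonnegative
  have hv_le : (∑ a, ∑ b, ∑ c, (if P a b c = 0 then 0 else SAC a c * SBC b c / SC c)) ≤ 1 := by
    have step1 : (∑ a, ∑ b, ∑ c, (if P a b c = 0 then 0 else SAC a c * SBC b c / SC c))
        ≤ ∑ a, ∑ b, ∑ c, SAC a c * SBC b c / SC c := by
      refine Finset.sum_le_sum fun a _ => Finset.sum_le_sum fun b _ =>
        Finset.sum_le_sum fun c _ => ?_
      by_cases hp : P a b c = 0
      · rw [if_pos hp]
        exact div_nonneg (mul_nonneg (hSAC0 a c) (hSBC0 b c)) (hSC0 c)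
      · rw [if_neg hp]
    have step2 : (∑ a, ∑ b, ∑ c, SAC a c * SBC b c / SC c)
        = ∑ c, SC c * SC c / SC c := by
      rw [show (∑ a, ∑ b, ∑ c, SAC a c * SBC b c / SC c)
          = ∑ c, ∑ a, ∑ b, SAC a c * SBC b c / SC c by
        rw [show (∑ a, ∑ b, ∑ c, SAC a c * SBC b c / SC c)
            = ∑ a, ∑ c, ∑ b, SAC a c * SBC b c / SC c from
          Finset.sum_congr rfl fun a _ => Finset.sum_comm]
        exact Finset.sum_comm]
      refine Finset.sum_congr rfl fun c _ => ?_
      rw [show (∑ a, ∑ b, SAC a c * SBC b c / SC c)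
          = (∑ a, SAC a c) * (∑ b, SBC b c) / SC c by
        rw [Finset.sum_mul, Finset.sum_div]
        refine Finset.sum_congr rfl fun a _ => ?_
        rw [Finset.mul_sum, Finset.sum_div]]
      congr 1
      · congr 1
        exact Finset.sum_comm
    have step3 : (∑ c, SC c * SC c / SC c) ≤ ∑ c, SC c := by
      refine Finset.sum_le_sum fun c _ => ?_
      by_cases hc : SC c = 0
      · rw [hc]; simp
      · rw [mul_div_assoc, div_self hc, mul_one]
    have step4 : (∑ c, SC c) = 1 := by
      rw [show (∑ c, SC c) = ∑ c, ∑ a, ∑ b, P a b c from rfl]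
      rw [Finset.sum_comm]
      rw [← hsum1]
      exact Finset.sum_congr rfl fun a _ => Finset.sum_comm
    linarith
  have hlhs : (1 - (∑ a, ∑ b, ∑ c, (if P a b c = 0 then 0
        else SAC a c * SBC b c / SC c))) / Real.log 2
      = ∑ a, ∑ b, ∑ c,
        (P a b c - (if P a b c = 0 then 0 else SAC a c * SBC b c / SC c)) / Real.log 2 := by
    rw [← hsum1]
    rw [← Finset.sum_sub_distrib, Finset.sum_div]
    refine Finset.sum_congr rfl fun a _ => ?_
    rw [← Finset.sum_sub_distrib, Finset.sum_div]
    refine Finset.sum_congr rfl fun b _ => ?_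
    rw [← Finset.sum_sub_distrib, Finset.sum_div]
  have : 0 ≤ (1 - (∑ a, ∑ b, ∑ c, (if P a b c = 0 then 0
      else SAC a c * SBC b c / SC c))) / Real.log 2 :=
    div_nonneg (by linarith) hL.le
  linarith [hlhs ▸ this, hsum_bound]
end Aux4

/-- `I(A;B | M, E_M) ≤ Σ_m [ I(A;B | E_m) + I(J_m;B | E_m, A) ]`, where `J_m` is the
indicator of `{M = m}` and the sum is over the values `m` in the support of `M`. -/
theorem condMI_le_sum_indicator {Ω α β γ ε : Type*}
    [Fintype Ω] [Fintype α] [Fintype β] [Fintype γ] [Fintype ε]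
    (μ : Ω → ℝ) (hμ : IsPMF μ)
    (A : Ω → α) (B : Ω → β) (M : Ω → γ) (E : γ → Ω → ε) :
    condMI μ A B (fun ω => (M ω, E (M ω) ω)) ≤
      ∑ m ∈ Finset.univ.filter (fun m => 0 < prEv μ (fun ω => M ω = m)),
        (condMI μ A B (E m)
          + condMI μ (fun ω => if M ω = m then true else false) B
              (fun ω => (E m ω, A ω))) := by
  rw [condMI_decomp μ hμ A B M E]
  refine Finset.sum_le_sum fun m hm => ?_
  rw [Finset.mem_filter] at hm
  have hpm : 0 < prEv μ (fun ω => M ω = m) := hm.2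
  set J : Ω → Bool := fun ω => if M ω = m then true else false with hJ
  have hiff : ∀ ω, J ω = true ↔ M ω = m := by
    intro ω; by_cases h : M ω = m <;> simp [hJ, h]
  have hq : prEv μ (fun ω => J ω = true) = prEv μ (fun ω => M ω = m) := prEv_congr μ hiff
  have hqpos : 0 < prEv μ (fun ω => J ω = true) := by rw [hq]; exact hpm
  have hmeas : condMeas μ J true = condMeas μ M m := by
    funext ω
    unfold condMeas
    rw [show prEv μ (fun ω' => J ω' = true) = prEv μ (fun ω' => M ω' = m) from hq]
    by_cases h : M ω = m
    · rw [if_pos ((hiff ω).2 h), if_pos h]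
    · rw [if_neg (fun hc => h ((hiff ω).1 hc)), if_neg h]
  have hdec : condMI μ A B (fun ω => (J ω, E m ω)) =
      ∑ j ∈ Finset.univ.filter (fun j => 0 < prEv μ (fun ω => J ω = j)),
        prEv μ (fun ω => J ω = j) * condMI (condMeas μ J j) A B (E m) :=
    condMI_decomp μ hμ A B J (fun _ => E m)
  have hmem : true ∈ Finset.univ.filter (fun j => 0 < prEv μ (fun ω => J ω = j)) := by
    simp only [Finset.mem_filter, Finset.mem_univ, true_and]
    exact hqpos
  have hsingle : prEv μ (fun ω => J ω = true) * condMI (condMeas μ J true) A B (E m)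
      ≤ ∑ j ∈ Finset.univ.filter (fun j => 0 < prEv μ (fun ω => J ω = j)),
        prEv μ (fun ω => J ω = j) * condMI (condMeas μ J j) A B (E m) := by
    refine Finset.single_le_sum
      (f := fun j => prEv μ (fun ω => J ω = j) * condMI (condMeas μ J j) A B (E m)) ?_ hmem
    intro j hj
    rw [Finset.mem_filter] at hj
    exact mul_nonneg hj.2.le (condMI_nonneg _ (IsPMF_condMeas μ hμ J j hj.2) A B (E m))
  have hch1 : condMI μ (fun ω => (A ω, J ω)) B (E m)
      = condMI μ A B (E m) + condMI μ J B (fun ω => (A ω, E m ω)) :=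
    condMI_chain μ A J B (E m)
  have hch2 : condMI μ (fun ω => (J ω, A ω)) B (E m)
      = condMI μ J B (E m) + condMI μ A B (fun ω => (J ω, E m ω)) :=
    condMI_chain μ J A B (E m)
  have hswap1 : condMI μ (fun ω => (J ω, A ω)) B (E m)
      = condMI μ (fun ω => (A ω, J ω)) B (E m) := by
    refine condMI_relabel_fst μ (fun ω => (A ω, J ω)) (fun ω => (J ω, A ω)) B (E m)
      Prod.swap Prod.swap_injective (fun ω => rfl)
  have hswap2 : condMI μ J B (fun ω => (E m ω, A ω))
      = condMI μ J B (fun ω => (A ω, E m ω)) := by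
    refine condMI_relabel_cond μ J B (fun ω => (A ω, E m ω)) (fun ω => (E m ω, A ω))
      Prod.swap Prod.swap_injective (fun ω => rfl)
  have h0 : 0 ≤ condMI μ J B (E m) := condMI_nonneg μ hμ J B (E m)
  rw [hq, hmeas] at hsingle
  rw [← hdec] at hsingle
  linarith
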